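/- Let R be a commutative ring having property (A) (as a module over itself) and M an R-module having property (A). Then the polynomial module M[X], viewed as a module over the polynomial ring R[X], is a torsion-free Auslander R[X]-module if and only if M is a torsion-free Auslander R-module; that is, Z_{R[X]}(M[X]) = Z_{R[X]}(R[X]) if and only if Z_R(M) = Z_R(R). -/

import Mathlib

/-!
McCoy's theorem for modules: if `f : R[X]` kills a nonzero element of `M[X]`, then it kills one,
`Q`, of least degree; by minimality every coefficient of `f` kills `Q`, in particular its top
coefficient. Hence `f` is a zero-divisor
on `M[X]` exactly when its coefficients have a common nonzero annihilator in `M`, which under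
property (A) means that the content ideal of `f` lies in `Z_R(M)`. Applied to `M` and to `R`, this
turns `Z_R(M) = Z_R(R)` into `Z_{R[X]}(M[X]) = Z_{R[X]}(R[X])`; conversely, a constant `C r` is a
zero-divisor on `M[X]` iff `r` is one on `M`.
-/

/-- `Z_R(M)`: the set of zero-divisors of `R` on the `R`-module `M`, i.e. those `r : R`
for which there exists a nonzero `m : M` with `r • m = 0`. -/
def zeroDivisorsOn (R : Type*) [CommRing R] (M : Type*) [AddCommGroup M] [Module R M] :
    Set R :=
  {r : R | ∃ m : M, m ≠ 0 ∧ r • m = 0}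


/-- An `R`-module `M` has property (A) if every finitely generated ideal `I ⊆ Z_R(M)`
has a nonzero annihilator in `M`. -/
def hasPropertyA (R : Type*) [CommRing R] (M : Type*) [AddCommGroup M] [Module R M] :
    Prop :=
  ∀ I : Ideal R, I.FG → (I : Set R) ⊆ zeroDivisorsOn R M →
    ∃ m : M, m ≠ 0 ∧ ∀ r ∈ I, r • m = 0

open Polynomial

section ZeroDivisors

variable {R M N : Type*} [CommRing R] [AddCommGroup M] [Module R M] [AddCommGroup N] [Module R N]

lemma zeroDivisorsOn_subset_of_injective (f : M →ₗ[R] N) (hf : Function.Injective f) :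
    zeroDivisorsOn R M ⊆ zeroDivisorsOn R N := by
  rintro r ⟨m, hm, hrm⟩
  exact ⟨f m, (map_ne_zero_iff f hf).2 hm, by rw [← map_smul, hrm, map_zero]⟩

lemma zeroDivisorsOn_congr (e : M ≃ₗ[R] N) : zeroDivisorsOn R M = zeroDivisorsOn R N :=
  (zeroDivisorsOn_subset_of_injective e.toLinearMap e.injective).antisymm
    (zeroDivisorsOn_subset_of_injective e.symm.toLinearMap e.symm.injective)

end ZeroDivisors

lemma Polynomial.forall_mem_contentIdeal_smul_eq_zero_iff {R M : Type*} [CommRing R]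
    [AddCommGroup M] [Module R M] {P : R[X]} {m : M} :
    (∀ r ∈ P.contentIdeal, r • m = 0) ↔ ∀ i, P.coeff i • m = 0 := by
  refine ⟨fun h i => h _ (P.coeff_mem_contentIdeal i), fun h r hr => ?_⟩
  have hle : P.contentIdeal ≤ LinearMap.ker (LinearMap.toSpanSingleton R M m) := by
    refine Ideal.span_le.2 fun s hs => ?_
    obtain ⟨i, -, rfl⟩ := mem_coeffs_iff.1 hs
    exact h i
  exact hle hr

namespace PolynomialModule

variable {R M : Type*} [CommRing R] [AddCommGroup M] [Module R M]

@[simp]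
lemma coeff_smul (r : R) (Q : PolynomialModule R M) : (r • Q).coeff = r • Q.coeff := rfl

lemma exists_forall_le_coeff_eq_zero (Q : PolynomialModule R M) :
    ∃ n, ∀ j, n ≤ j → Q.coeff j = 0 := by
  refine ⟨Q.coeff.support.sup id + 1, fun j hj => Finsupp.notMem_support_iff.1 fun hmem => ?_⟩
  have := Finset.le_sup (f := id) hmem
  simp only [id] at this
  omega

lemma coeff_smul_add_eq_of_forall {P : R[X]} {Q : PolynomialModule R M} {i d : ℕ}
    (hP : ∀ j, i < j → P.coeff j • Q = 0) (hQ : ∀ j, d < j → Q.coeff j = 0) :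
    (P • Q).coeff (i + d) = P.coeff i • Q.coeff d := by
  rw [smul_apply]
  refine Finset.sum_eq_single (i, d) ?_ (by simp)
  rintro ⟨j, k⟩ hjk hne
  rw [Finset.HasAntidiagonal.mem_antidiagonal] at hjk
  obtain hj | rfl | hj := lt_trichotomy j i
  · rw [hQ k (by omega), smul_zero]
  · exact (hne (by rw [Prod.mk.injEq]; omega)).elim
  · simpa using congr($(hP j hj).coeff k)

/-- McCoy's theorem for polynomial modules. -/
theorem exists_forall_coeff_smul_eq_zero {P : R[X]} {Q : PolynomialModule R M} (hQ : Q ≠ 0)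
    (hPQ : P • Q = 0) : ∃ m : M, m ≠ 0 ∧ ∀ i, P.coeff i • m = 0 := by
  classical
  have hex : ∃ n, ∃ Q : PolynomialModule R M, Q ≠ 0 ∧ P • Q = 0 ∧ ∀ j, n ≤ j → Q.coeff j = 0 :=
    (exists_forall_le_coeff_eq_zero Q).imp fun _ hn => ⟨Q, hQ, hPQ, hn⟩
  obtain ⟨Q, hQ, hPQ, hQn⟩ := Nat.find_spec hex
  obtain ⟨d, hd⟩ : ∃ d, Nat.find hex = d + 1 :=
    Nat.exists_eq_succ_of_ne_zero fun h0 => hQ (by ext j; simp [hQn j (by omega)])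
  have hmin : ∀ Q' : PolynomialModule R M, P • Q' = 0 → (∀ j, d ≤ j → Q'.coeff j = 0) → Q' = 0 :=
    fun Q' hPQ' hQ' => by_contra fun hne => Nat.find_min hex (by omega) ⟨Q', hne, hPQ', hQ'⟩
  have hQd : Q.coeff d ≠ 0 := fun h => hQ <| hmin Q hPQ fun j hj => by
    obtain rfl | hj := hj.eq_or_lt
    exacts [h, hQn j (by omega)]
  -- Downward induction on `i`: if the higher coefficients of `P` kill `Q`, then `P.coeff i • Q`
  -- is killed by `P` and loses its coefficient at `d`, so it vanishes by minimality of `d`.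
  have hkill : ∀ i, P.coeff i • Q = 0 := by
    refine Nat.strong_decreasing_induction ⟨P.natDegree, fun i hi => ?_⟩ fun i ih => ?_
    · rw [coeff_eq_zero_of_natDegree_lt hi, zero_smul]
    have htop : P.coeff i • Q.coeff d = 0 := by
      rw [← coeff_smul_add_eq_of_forall ih fun j hj => hQn j (by omega), hPQ]
      rfl
    refine hmin _ (by rw [smul_algebra_smul_comm, hPQ, smul_zero]) fun j hj => ?_
    obtain rfl | hj := hj.eq_or_lt
    · simpa using htop
    · simp [hQn j (by omega)]
  exact ⟨Q.coeff d, hQd, fun i => by simpa using congr($(hkill i).coeff d)⟩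

lemma mem_zeroDivisorsOn_iff {P : R[X]} :
    P ∈ zeroDivisorsOn R[X] (PolynomialModule R M) ↔ ∃ m : M, m ≠ 0 ∧ ∀ i, P.coeff i • m = 0 := by
  refine ⟨fun ⟨Q, hQ, hPQ⟩ => exists_forall_coeff_smul_eq_zero hQ hPQ, fun ⟨m, hm, hPm⟩ => ?_⟩
  refine ⟨single R 0 m, by simpa [← coeff_inj] using hm, ?_⟩
  ext j
  simp [hPm]

lemma C_mem_zeroDivisorsOn_iff {r : R} :
    C r ∈ zeroDivisorsOn R[X] (PolynomialModule R M) ↔ r ∈ zeroDivisorsOn R M := by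
  simp only [mem_zeroDivisorsOn_iff, coeff_C]
  refine exists_congr fun m => and_congr_right fun _ => ⟨fun h => by simpa using h 0, fun h i => ?_⟩
  split_ifs <;> simp [h]

lemma preimage_C_zeroDivisorsOn :
    C ⁻¹' zeroDivisorsOn R[X] (PolynomialModule R M) = zeroDivisorsOn R M :=
  Set.ext fun _ => C_mem_zeroDivisorsOn_iff

lemma zeroDivisorsOn_eq_of_hasPropertyA (hA : hasPropertyA R M) :
    zeroDivisorsOn R[X] (PolynomialModule R M) =
      {P | (P.contentIdeal : Set R) ⊆ zeroDivisorsOn R M} := by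
  ext P
  rw [mem_zeroDivisorsOn_iff]
  constructor
  · rintro ⟨m, hm, hPm⟩ r hr
    exact ⟨m, hm, forall_mem_contentIdeal_smul_eq_zero_iff.2 hPm r hr⟩
  · intro hP
    obtain ⟨m, hm, hPm⟩ := hA _ P.contentIdeal_FG hP
    exact ⟨m, hm, forall_mem_contentIdeal_smul_eq_zero_iff.1 hPm⟩

end PolynomialModule

/-- If both `R` and `M` have property (A), then `M[X]` is a torsion-free Auslander
`R[X]`-module iff `M` is a torsion-free Auslander `R`-module. -/
theorem polynomialModule_torsionFree_auslander_iff (R : Type*) [CommRing R]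
    (M : Type*) [AddCommGroup M] [Module R M]
    (hAR : hasPropertyA R R) (hAM : hasPropertyA R M) :
    zeroDivisorsOn (Polynomial R) (PolynomialModule R M) =
        zeroDivisorsOn (Polynomial R) (Polynomial R) ↔
      zeroDivisorsOn R M = zeroDivisorsOn R R := by
  rw [← zeroDivisorsOn_congr PolynomialModule.equivPolynomialSelf]
  refine ⟨fun h => ?_, fun h => ?_⟩
  · rw [← PolynomialModule.preimage_C_zeroDivisorsOn (M := M), h,
      PolynomialModule.preimage_C_zeroDivisorsOn]
  · rw [PolynomialModule.zeroDivisorsOn_eq_of_hasPropertyA hAM,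
      PolynomialModule.zeroDivisorsOn_eq_of_hasPropertyA hAR, h]
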